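/- Let b ∈ ℝ and g ∈ SL(2, ℝ) with entries g = (α β; γ δ), and define f_g : ℍ → ℝ by f_g(z) = 2b·arg(γz + δ), where arg is the principal argument. Then f_g is (real) differentiable on the upper half-plane ℍ, and for every z ∈ ℍ and every w ∈ ℂ: (b / Im(g•z)) · Re( w / (γz + δ)² ) = (b / Im z) · Re(w) + D f_g(z)[w], where g•z = (αz + β)/(γz + δ) is the Möbius action and D f_g(z) is the real Fréchet derivative of f_g at z. -/

import Mathlib

open Complex

/-- The Möbius action of `SL(2, ℝ)` on the upper half-plane:
`g • z = (α z + β)/(γ z + δ)`. -/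
noncomputable def moebius (g : Matrix.SpecialLinearGroup (Fin 2) ℝ) (z : ℂ) : ℂ :=
  (((g 0 0 : ℝ) : ℂ) * z + ((g 0 1 : ℝ) : ℂ)) / (((g 1 0 : ℝ) : ℂ) * z + ((g 1 1 : ℝ) : ℂ))

/-- The gauge exponent `f_g (z) = 2 b arg (γ z + δ)`, where `(γ, δ)` is the bottom row
of `g` and `arg` is the principal argument. -/
noncomputable def gaugeExponent (b : ℝ) (g : Matrix.SpecialLinearGroup (Fin 2) ℝ)
    (z : ℂ) : ℝ :=
  2 * b * Complex.arg (((g 1 0 : ℝ) : ℂ) * z + ((g 1 1 : ℝ) : ℂ))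

lemma gauge_hasFDerivAt (b : ℝ) (g : Matrix.SpecialLinearGroup (Fin 2) ℝ)
    (z : ℂ) (hz : 0 < z.im) :
    HasFDerivAt (fun z : ℂ => 2 * b * Complex.arg (((g 1 0 : ℝ) : ℂ) * z + ((g 1 1 : ℝ) : ℂ)))
      ((2 * b) • (Complex.imCLM.comp
        (((((g 1 0 : ℝ) : ℂ) * z + ((g 1 1 : ℝ) : ℂ))⁻¹ * ((g 1 0 : ℝ) : ℂ)) •
          (ContinuousLinearMap.id ℝ ℂ)))) z := by
  set c : ℝ := g 1 0 with hc
  set d : ℝ := g 1 1 with hd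
  by_cases h : c = 0
  · have heq : (fun z : ℂ => 2 * b * Complex.arg ((c : ℂ) * z + (d : ℂ)))
        = fun _ : ℂ => 2 * b * Complex.arg (d : ℂ) := by
      funext w; simp [h]
    rw [heq]
    have h0 : ((2 * b) • (Complex.imCLM.comp
        ((((c : ℂ) * z + (d : ℂ))⁻¹ * (c : ℂ)) • (ContinuousLinearMap.id ℝ ℂ))))
        = (0 : ℂ →L[ℝ] ℝ) := by
      ext w; simp [h]
    rw [h0]
    exact hasFDerivAt_const _ _
  · have hslit : (c : ℂ) * z + (d : ℂ) ∈ Complex.slitPlane := by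
      rw [Complex.mem_slitPlane_iff]
      right
      simp only [Complex.add_im, Complex.mul_im, Complex.ofReal_re, Complex.ofReal_im,
        zero_mul, add_zero]
      exact mul_ne_zero h (ne_of_gt hz)
    have hden : HasDerivAt (fun w : ℂ => (c : ℂ) * w + (d : ℂ)) (c : ℂ) z := by
      simpa using ((hasDerivAt_id z).const_mul (c : ℂ)).add_const (d : ℂ)
    have hlog : HasDerivAt (fun w : ℂ => Complex.log ((c : ℂ) * w + (d : ℂ)))
        (((c : ℂ) * z + (d : ℂ))⁻¹ * (c : ℂ)) z :=
      (Complex.hasDerivAt_log hslit).comp (h₂ := Complex.log) z hden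
    have hIm : HasFDerivAt (fun w : ℂ => 2 * b * (Complex.log ((c : ℂ) * w + (d : ℂ))).im)
        ((2 * b) • (Complex.imCLM.comp
          (ContinuousLinearMap.restrictScalars ℝ (ContinuousLinearMap.smulRight
            (1 : ℂ →L[ℂ] ℂ) (((c : ℂ) * z + (d : ℂ))⁻¹ * (c : ℂ)))))) z := by
      exact (Complex.imCLM.hasFDerivAt.comp z (hlog.hasFDerivAt.restrictScalars ℝ)).const_smul (2 * b)
    have hfun : (fun z : ℂ => 2 * b * Complex.arg ((c : ℂ) * z + (d : ℂ)))
        = fun w : ℂ => 2 * b * (Complex.log ((c : ℂ) * w + (d : ℂ))).im := by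
      funext w; rw [Complex.log_im]
    rw [hfun]
    convert hIm using 1
    ext w
    simp [smul_eq_mul]
    ring_nf
    exact Or.inl trivial

/-- Theorem B.2(b) of the paper: the constant curvature connection one-form
`A^b = b y⁻¹ dx` (whose value at `z` on a tangent vector `w` is `(b / Im z) Re w`) is
equivariant: its pullback under the Möbius transformation `g` equals `A^b + d f_g`,
where `f_g (z) = 2 b arg (γ z + δ)`. -/
theorem constant_curvature_connection_equivariance
    (b : ℝ) (g : Matrix.SpecialLinearGroup (Fin 2) ℝ) :
    (∀ z : ℂ, 0 < z.im → DifferentiableAt ℝ (gaugeExponent b g) z) ∧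
    (∀ z : ℂ, 0 < z.im → ∀ w : ℂ,
      (b / (moebius g z).im) *
          (w / (((g 1 0 : ℝ) : ℂ) * z + ((g 1 1 : ℝ) : ℂ)) ^ 2).re
        = (b / z.im) * w.re + fderiv ℝ (gaugeExponent b g) z w) := by
  set c : ℝ := g 1 0 with hc
  set d : ℝ := g 1 1 with hd
  have hdet : (g 0 0) * d - (g 0 1) * c = 1 := by
    have := g.2
    rwa [Matrix.det_fin_two] at this
  constructor
  · intro z hz
    exact (gauge_hasFDerivAt b g z hz).differentiableAt
  · intro z hz w
    have hne : (c : ℂ) * z + (d : ℂ) ≠ 0 := by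
      intro h0
      have him0 : c * z.im = 0 := by
        have := congrArg Complex.im h0
        simpa using this
      have hc0 : c = 0 := by
        rcases mul_eq_zero.mp him0 with h1 | h1
        · exact h1
        · exact absurd h1 (ne_of_gt hz)
      have hre0 : d = 0 := by
        have := congrArg Complex.re h0
        simpa [hc0] using this
      rw [hc0, hre0] at hdet
      simp at hdet
    have hns : Complex.normSq ((c : ℂ) * z + (d : ℂ)) ≠ 0 := by
      simpa [Complex.normSq_eq_zero] using hne
    have hnsv : Complex.normSq ((c : ℂ) * z + (d : ℂ))
        = (c * z.re + d) ^ 2 + (c * z.im) ^ 2 := by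
      simp [Complex.normSq_apply, Complex.add_re, Complex.add_im, Complex.mul_re,
        Complex.mul_im, Complex.ofReal_re, Complex.ofReal_im]
      ring
    have him : (moebius g z).im = z.im / Complex.normSq ((c : ℂ) * z + (d : ℂ)) := by
      rw [moebius, Complex.div_im, ← hc, ← hd, div_sub_div_same]
      rw [div_eq_div_iff hns hns]
      simp only [Complex.add_re, Complex.add_im, Complex.mul_re, Complex.mul_im,
        Complex.ofReal_re, Complex.ofReal_im]
      linear_combination (z.im * Complex.normSq ((c : ℂ) * z + (d : ℂ))) * hdet
    have hder := (gauge_hasFDerivAt b g z hz).fderiv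
    have hfg : fderiv ℝ (gaugeExponent b g) z = fderiv ℝ
        (fun z : ℂ => 2 * b * Complex.arg ((c : ℂ) * z + (d : ℂ))) z := rfl
    rw [hfg, hder]
    have heval : ((2 * b) • (Complex.imCLM.comp
        ((((c : ℂ) * z + (d : ℂ))⁻¹ * (c : ℂ)) • (ContinuousLinearMap.id ℝ ℂ)))) w
        = 2 * b * ((((c : ℂ) * z + (d : ℂ))⁻¹ * (c : ℂ)) * w).im := by
      simp [smul_eq_mul]
    rw [heval, him]
    have hy : z.im ≠ 0 := ne_of_gt hz
    have hP : (c * z.re + d) ^ 2 + (c * z.im) ^ 2 ≠ 0 := by rw [← hnsv]; exact hns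
    rw [div_div_eq_mul_div]
    simp only [Complex.div_re, Complex.mul_im, Complex.mul_re, Complex.inv_re, Complex.inv_im,
      Complex.add_re, Complex.add_im, Complex.ofReal_re, Complex.ofReal_im,
      Complex.normSq_mul, hnsv, pow_two]
    have hP' : (c * z.re + d) * (c * z.re + d) + c * z.im * (c * z.im) ≠ 0 := by
      intro h0; apply hP; rw [← h0]; ring
    field_simp [hy, hP']
    have hD : (c * z.re + d) ^ 2 + c ^ 2 * z.im ^ 2 ≠ 0 := by rw [← mul_pow]; exact hP
    field_simp
    ring
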